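/- In the affiliation network model with parameter θ* and 1 ≤ m ≤ n, let V = V(θ*) be the Fisher information matrix (which equals the covariance matrix of g), let S be the approximating matrix built from V, let R = V^{−1} − S, and let U = Cov[R(g − E g)] = R V Rᵀ. Then ‖U‖ ≤ ‖V^{−1} − S‖ + 3(1 + e^{2‖θ*‖_∞})⁴ / (4 m n e^{4‖θ*‖_∞}), where ‖A‖ := max_{i,j} |a_{ij}|. -/

import Mathlib

open MeasureTheory ProbabilityTheory Filter Matrix Topology
open scoped ENNReal NNReal

noncomputable section

namespace Affiliation

/-- Index type for the parameter vector `θ ∈ ℝ^{m+n-1}`: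
`Sum.inl i` corresponds to the coordinate `α_i` (`1 ≤ i ≤ m`),
`Sum.inr j` to the coordinate `β_j` (`1 ≤ j ≤ n-1`). -/
abbrev Idx (m n : ℕ) := Fin m ⊕ Fin (n - 1)

/-- The logistic function `e^x / (1 + e^x)`. -/
def pf (x : ℝ) : ℝ := Real.exp x / (1 + Real.exp x)

/-- `e^x / (1 + e^x)^2`, the derivative of the logistic function. -/
def pf' (x : ℝ) : ℝ := Real.exp x / (1 + Real.exp x) ^ 2

variable {m n : ℕ} {Ω : Type*}

/-- `α_i` read off from `θ`. -/
def alphaF (θ : Idx m n → ℝ) (i : Fin m) : ℝ := θ (Sum.inl i)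

/-- `β_j` read off from `θ`, with the convention `β_n = 0`. -/
def betaF (θ : Idx m n → ℝ) (j : Fin n) : ℝ :=
  if h : (j : ℕ) < n - 1 then θ (Sum.inr ⟨j, h⟩) else 0

/-- The degree `d_i = Σ_j x_{ij}` of event `i`. -/
def degVec (X : Fin m → Fin n → Ω → ℝ) (ω : Ω) (i : Fin m) : ℝ := ∑ j, X i j ω

/-- The degree `b_j = Σ_i x_{ij}` of actor `j`. -/
def bVec (X : Fin m → Fin n → Ω → ℝ) (ω : Ω) (j : Fin n) : ℝ := ∑ i, X i j ω

/-- The vector `g = (d_1, …, d_m, b_1, …, b_{n-1})`. -/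
def gvec (X : Fin m → Fin n → Ω → ℝ) (ω : Ω) : Idx m n → ℝ :=
  Sum.elim (degVec X ω) (fun j => bVec X ω (Fin.castLE (Nat.sub_le n 1) j))

/-- The affiliation network model: the `x_{ij}` are mutually independent `{0,1}`-valued
random variables with `P(x_{ij} = 1) = e^{α_i+β_j}/(1+e^{α_i+β_j})` (convention `β_n = 0`). -/
structure IsAffilModel [MeasurableSpace Ω] (P : Measure Ω)
    (θ : Idx m n → ℝ) (X : Fin m → Fin n → Ω → ℝ) : Prop where
  isProb : IsProbabilityMeasure P
  meas : ∀ i j, Measurable (X i j)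
  binary : ∀ i j ω, X i j ω = 0 ∨ X i j ω = 1
  indep : iIndepFun (fun p : Fin m × Fin n => X p.1 p.2) P
  prob_one : ∀ i j, P {ω | X i j ω = 1} = ENNReal.ofReal (pf (alphaF θ i + betaF θ j))

/-- The expectation `E g`. -/
def Eg [MeasurableSpace Ω] (P : Measure Ω) (X : Fin m → Fin n → Ω → ℝ) (k : Idx m n) : ℝ :=
  ∫ ω, gvec X ω k ∂P

/-- The likelihood equations: `θ` is an MLE for the observed degrees `(d, b)`. -/
def IsMLE (d : Fin m → ℝ) (b : Fin (n - 1) → ℝ) (θ : Idx m n → ℝ) : Prop :=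
  (∀ i, d i = ∑ j : Fin n, pf (alphaF θ i + betaF θ j)) ∧
  (∀ j : Fin (n - 1), b j = ∑ i : Fin m, pf (alphaF θ i + θ (Sum.inr j)))

/-- `θ` is an MLE for the degrees observed at the sample point `ω`. -/
def IsMLEat (X : Fin m → Fin n → Ω → ℝ) (ω : Ω) (θ : Idx m n → ℝ) : Prop :=
  IsMLE (degVec X ω) (fun j => bVec X ω (Fin.castLE (Nat.sub_le n 1) j)) θ

/-- The Fisher information matrix `V(θ)`. -/
def fisher (θ : Idx m n → ℝ) : Matrix (Idx m n) (Idx m n) ℝ :=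
  fun k l => match k, l with
  | Sum.inl i, Sum.inl i' => if i = i' then ∑ j : Fin n, pf' (alphaF θ i + betaF θ j) else 0
  | Sum.inl i, Sum.inr j => pf' (alphaF θ i + θ (Sum.inr j))
  | Sum.inr j, Sum.inl i => pf' (alphaF θ i + θ (Sum.inr j))
  | Sum.inr j, Sum.inr j' => if j = j' then ∑ i : Fin m, pf' (alphaF θ i + θ (Sum.inr j)) else 0

/-- `v_{i,m+n} := v_{ii} - Σ_{j ≠ i} v_{ij}`. -/
def vRem (V : Matrix (Idx m n) (Idx m n) ℝ) (i : Idx m n) : ℝ :=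
  V i i - ∑ j ∈ Finset.univ.erase i, V i j

/-- `v_{m+n,m+n} := Σ_{i=1}^{m+n-1} v_{i,m+n}`. -/
def vnnOf (V : Matrix (Idx m n) (Idx m n) ℝ) : ℝ := ∑ i, vRem V i

/-- `v_{m+n,m+n}` for the Fisher information matrix,
`Σ_{i=1}^m (v_{ii} - Σ_{j=m+1}^{m+n-1} v_{ij})`. -/
def vnnFisher (θ : Idx m n → ℝ) : ℝ :=
  ∑ i : Fin m,
    (fisher θ (Sum.inl i) (Sum.inl i) - ∑ j : Fin (n - 1), fisher θ (Sum.inl i) (Sum.inr j))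

/-- The approximating matrix `S` built from `V`, with `1/v_{m+n,m+n}` replaced by `1/c`. -/
def approxSWith (V : Matrix (Idx m n) (Idx m n) ℝ) (c : ℝ) : Matrix (Idx m n) (Idx m n) ℝ :=
  fun k l => match k, l with
  | Sum.inl i, Sum.inl i' => (if i = i' then (V (Sum.inl i) (Sum.inl i))⁻¹ else 0) + c⁻¹
  | Sum.inr j, Sum.inr j' => (if j = j' then (V (Sum.inr j) (Sum.inr j))⁻¹ else 0) + c⁻¹
  | _, _ => -c⁻¹

/-- The approximating matrix `S` built from a matrix `V` in the class `L_{m,n}(q,Q)`. -/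
def approxS (V : Matrix (Idx m n) (Idx m n) ℝ) : Matrix (Idx m n) (Idx m n) ℝ :=
  approxSWith V (vnnOf V)

/-- The approximating matrix `S` built from the Fisher information matrix `V(θ)`. -/
def fisherS (θ : Idx m n → ℝ) : Matrix (Idx m n) (Idx m n) ℝ :=
  approxSWith (fisher θ) (vnnFisher θ)

/-- Membership in the matrix class `L_{m,n}(q,Q)`. -/
structure MemL (m n : ℕ) (q Q : ℝ) (V : Matrix (Idx m n) (Idx m n) ℝ) : Prop where
  symm : V.IsSymm
  nonneg : ∀ i j, 0 ≤ V i j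
  zero_ll : ∀ a b : Fin m, a ≠ b → V (Sum.inl a) (Sum.inl b) = 0
  zero_rr : ∀ a b : Fin (n - 1), a ≠ b → V (Sum.inr a) (Sum.inr b) = 0
  cross_lb : ∀ (a : Fin m) (b : Fin (n - 1)), q ≤ V (Sum.inl a) (Sum.inr b)
  cross_ub : ∀ (a : Fin m) (b : Fin (n - 1)), V (Sum.inl a) (Sum.inr b) ≤ Q
  diag_l_lb : ∀ a : Fin m,
    q ≤ V (Sum.inl a) (Sum.inl a) - ∑ b : Fin (n - 1), V (Sum.inl a) (Sum.inr b)
  diag_l_ub : ∀ a : Fin m,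
    V (Sum.inl a) (Sum.inl a) - ∑ b : Fin (n - 1), V (Sum.inl a) (Sum.inr b) ≤ Q
  diag_r : ∀ b : Fin (n - 1), V (Sum.inr b) (Sum.inr b) = ∑ a : Fin m, V (Sum.inl a) (Sum.inr b)

/-- `‖A‖ := max_{i,j} |a_{ij}|`. -/
def matNorm (A : Matrix (Idx m n) (Idx m n) ℝ) : ℝ :=
  ‖fun p : Idx m n × Idx m n => A p.1 p.2‖

/-- The index (0-based) `i` of `θ ∈ ℝ^{m+n-1}` as an element of `Idx m n`, if it exists. -/
def coordIdx (m n i : ℕ) : Option (Idx m n) :=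
  if h : i < m then some (Sum.inl ⟨i, h⟩)
  else if h' : i - m < n - 1 then some (Sum.inr ⟨i - m, h'⟩)
  else none

/-- The `i`-th coordinate (0-based) of a vector `x ∈ ℝ^{m+n-1}` (junk value `0` out of range). -/
def coordVal (x : Idx m n → ℝ) (i : ℕ) : ℝ := ((coordIdx m n i).map x).getD 0

/-- The upper-left `k × k` block of a matrix indexed by `Idx m n`. -/
def blockK (A : Matrix (Idx m n) (Idx m n) ℝ) (k : ℕ) : Matrix (Fin k) (Fin k) ℝ :=
  fun i j => match coordIdx m n (i : ℕ), coordIdx m n (j : ℕ) with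
    | some a, some b => A a b
    | _, _ => 0

/-- The inverse square root `A^{-1/2}` of a positive semidefinite matrix
(junk value `0` if `A` is not positive semidefinite). -/
def invSqrt {k : ℕ} (A : Matrix (Fin k) (Fin k) ℝ) : Matrix (Fin k) (Fin k) ℝ :=
  letI := Classical.propDecidable A.PosSemidef
  if h : A.PosSemidef then ((h.1.eigenvectorUnitary : Matrix (Fin k) (Fin k) ℝ) *
    diagonal (Real.sqrt ∘ h.1.eigenvalues) *
    (star h.1.eigenvectorUnitary : Matrix (Fin k) (Fin k) ℝ))⁻¹ else 0

/-- The standard Gaussian distribution `N(0, I_k)` on `ℝ^k`. -/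
def stdGaussian (k : ℕ) : Measure (Fin k → ℝ) :=
  Measure.pi fun _ => gaussianReal 0 1

/-- The function `F(θ)` whose components are
`F_i(θ) = d_i - Σ_k f(α_i + β_k)` and `F_{m+j}(θ) = b_j - Σ_k f(α_k + β_j)`. -/
def Fvec (f : ℝ → ℝ) (d : Fin m → ℝ) (b : Fin (n - 1) → ℝ) (θ : Idx m n → ℝ) : Idx m n → ℝ :=
  fun k => match k with
  | Sum.inl i => d i - ∑ j : Fin n, f (alphaF θ i + betaF θ j)
  | Sum.inr j => b j - ∑ i : Fin m, f (alphaF θ i + θ (Sum.inr j))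

/-- The Jacobian matrix `F'(θ)` of `Fvec f d b`. -/
def jacF (f : ℝ → ℝ) (θ : Idx m n → ℝ) : Matrix (Idx m n) (Idx m n) ℝ :=
  fun k l => match k, l with
  | Sum.inl i, Sum.inl i' =>
      if i = i' then -∑ j : Fin n, deriv f (alphaF θ i + betaF θ j) else 0
  | Sum.inl i, Sum.inr j => -deriv f (alphaF θ i + θ (Sum.inr j))
  | Sum.inr j, Sum.inl i => -deriv f (alphaF θ i + θ (Sum.inr j))
  | Sum.inr j, Sum.inr j' =>
      if j = j' then -∑ i : Fin m, deriv f (alphaF θ i + θ (Sum.inr j)) else 0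

/-- The Newton iterates `θ^{(k+1)} = θ^{(k)} - [F'(θ^{(k)})]⁻¹ F(θ^{(k)})`. -/
def newton (f : ℝ → ℝ) (d : Fin m → ℝ) (b : Fin (n - 1) → ℝ) (θ0 : Idx m n → ℝ) :
    ℕ → Idx m n → ℝ
  | 0 => θ0
  | k + 1 =>
    newton f d b θ0 k - (jacF f (newton f d b θ0 k))⁻¹.mulVec (Fvec f d b (newton f d b θ0 k))

/-!
Write `S = D⁻¹ + c⁻¹ u uᵀ` with `D = diag V`, `u = (1, …, 1, -1, …, -1)` and `c = uᵀ V u`.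
As `R = V⁻¹ - S` is symmetric, `R V Rᵀ = ±R + (S V S - S)`, and expanding the product gives
`S V S - S = D⁻¹ (V - D) D⁻¹ + c⁻¹ (D⁻¹ V u uᵀ + u uᵀ V D⁻¹)`.
For `V` in the class `L_{m,n}(q, Q)` the vector `V u` vanishes on the `β`-coordinates and lies in
`[q, Q]` on the `α`-coordinates, the diagonal entries are at least `n q` resp. `m q`, and
`c ≥ m q`; so each of the three terms is at most `Q / (m q · n q)`. The Fisher matrix lies in
`L_{m,n}(q, 1/4)` for `q = e^{2‖θ‖} / (1 + e^{2‖θ‖})²`, because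
`e^x / (1 + e^x)² = 1 / (2 cosh (x/2))²` is even and decreasing in `|x|`.
-/

theorem le_div_mul_abs_mul {Q x y a b : ℝ} (hQ : 0 ≤ Q) (hx : 0 < x) (hy : 0 < y) (ha : x ≤ a)
    (hb : y ≤ b) : Q ≤ Q / (x * y) * |a * b| :=
  calc Q = Q / (x * y) * (x * y) := (div_mul_cancel₀ _ (by positivity)).symm
    _ ≤ Q / (x * y) * |a * b| := by
      gcongr
      exact (mul_le_mul ha hb hy.le (hx.le.trans ha)).trans (le_abs_self _)

section DiagonalPlusRankOne

variable {ι 𝕜 : Type*} [DecidableEq ι] [Field 𝕜]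

def diagInvAddRankOne (d u : ι → 𝕜) (c : 𝕜) : Matrix ι ι 𝕜 :=
  diagonal d⁻¹ + c⁻¹ • vecMulVec u u

theorem diagInvAddRankOne_isSymm (d u : ι → 𝕜) (c : 𝕜) : (diagInvAddRankOne d u c).IsSymm := by
  simp [diagInvAddRankOne, Matrix.IsSymm, transpose_add, transpose_smul]

theorem sub_diagonal_diag_apply (V : Matrix ι ι 𝕜) (k l : ι) :
    (V - diagonal V.diag) k l = if k = l then 0 else V k l := by
  by_cases h : k = l
  · subst h; simp
  · simp [h]

variable [Fintype ι]

theorem diagInvAddRankOne_mul_mul_self_sub {V : Matrix ι ι 𝕜} (hV : V.IsSymm) (d u : ι → 𝕜)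
    {c : 𝕜} (hc : u ⬝ᵥ V *ᵥ u = c) :
    diagInvAddRankOne d u c * V * diagInvAddRankOne d u c - diagInvAddRankOne d u c =
      diagonal d⁻¹ * (V - diagonal d) * diagonal d⁻¹ +
        c⁻¹ • (vecMulVec (diagonal d⁻¹ *ᵥ V *ᵥ u) u + vecMulVec u (diagonal d⁻¹ *ᵥ V *ᵥ u)) := by
  have hl : diagonal d⁻¹ * V * vecMulVec u u = vecMulVec (diagonal d⁻¹ *ᵥ V *ᵥ u) u := by
    rw [mul_vecMulVec, mulVec_mulVec]
  have hr : vecMulVec u u * V * diagonal d⁻¹ = vecMulVec u (diagonal d⁻¹ *ᵥ V *ᵥ u) := by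
    rw [vecMulVec_mul, vecMulVec_mul, ← vecMul_transpose, ← vecMul_transpose, hV.eq,
      diagonal_transpose]
  have hm : vecMulVec u u * V * vecMulVec u u = c • vecMulVec u u := by
    rw [vecMulVec_mul, vecMulVec_mul_vecMulVec, ← dotProduct_mulVec, hc, vecMulVec_smul]
  have hd : diagonal d⁻¹ * diagonal d * diagonal d⁻¹ = diagonal d⁻¹ := by
    simp only [diagonal_mul_diagonal]
    congr 1
    ext k
    simpa using mul_inv_mul_cancel (d k)⁻¹
  have hcc : c⁻¹ * (c⁻¹ * c) = c⁻¹ := by rcases eq_or_ne c 0 with rfl | h <;> simp [*]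
  simp only [diagInvAddRankOne, Matrix.add_mul, Matrix.mul_add, Matrix.smul_mul, Matrix.mul_smul,
    Matrix.mul_sub, Matrix.sub_mul, hl, hr, hm, hd, smul_smul, smul_add, hcc]
  abel

theorem abs_diagInvAddRankOne_mul_mul_self_sub_apply_le {V : Matrix ι ι ℝ} (hV : V.IsSymm)
    {d u : ι → ℝ} {c K : ℝ} (hc : u ⬝ᵥ V *ᵥ u = c) (hK : 0 ≤ K) (hu : ∀ k, |u k| ≤ 1)
    (hoff : ∀ k l, |(V - diagonal d) k l| ≤ K * |d k * d l|)
    (hVu : ∀ k, |(V *ᵥ u) k| ≤ K * |c * d k|) (k l : ι) :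
    |(diagInvAddRankOne d u c * V * diagInvAddRankOne d u c - diagInvAddRankOne d u c) k l| ≤
      3 * K := by
  have hVu' : ∀ k, |c⁻¹ * ((d k)⁻¹ * (V *ᵥ u) k)| ≤ K := fun k => by
    rw [← mul_assoc, ← mul_inv, abs_mul, abs_inv, ← div_eq_inv_mul]
    exact div_le_of_le_mul₀ (abs_nonneg _) hK (hVu k)
  have hoff' : |(d k)⁻¹ * (V - diagonal d) k l * (d l)⁻¹| ≤ K := by
    rw [mul_comm, ← mul_assoc, ← mul_inv, abs_mul, abs_inv, ← div_eq_inv_mul, mul_comm (d l)]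
    exact div_le_of_le_mul₀ (abs_nonneg _) hK (hoff k l)
  rw [diagInvAddRankOne_mul_mul_self_sub hV d u hc]
  simp only [Matrix.add_apply, Matrix.smul_apply, diagonal_mul, mul_diagonal, vecMulVec_apply,
    mulVec_diagonal, Pi.inv_apply, smul_eq_mul]
  calc _ = |(d k)⁻¹ * (V - diagonal d) k l * (d l)⁻¹ + c⁻¹ * ((d k)⁻¹ * (V *ᵥ u) k) * u l
        + u k * (c⁻¹ * ((d l)⁻¹ * (V *ᵥ u) l))| := by congr 1; ring
    _ ≤ |(d k)⁻¹ * (V - diagonal d) k l * (d l)⁻¹| + |c⁻¹ * ((d k)⁻¹ * (V *ᵥ u) k)| * |u l|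
        + |u k| * |c⁻¹ * ((d l)⁻¹ * (V *ᵥ u) l)| := by
        rw [← abs_mul, ← abs_mul]
        exact abs_add_three _ _ _
    _ ≤ K + K * 1 + 1 * K := by
        gcongr
        all_goals first | exact hu _ | exact hVu' _
    _ = 3 * K := by ring

theorem abs_inv_sub_mul_mul_inv_sub_transpose_apply_le
    {V S : Matrix ι ι ℝ} (hV : V.IsSymm) (hS : S.IsSymm) (k l : ι) :
    |((V⁻¹ - S) * V * (V⁻¹ - S)ᵀ) k l| ≤ |(V⁻¹ - S) k l| + |(S * V * S - S) k l| := by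
  rw [transpose_sub, transpose_nonsing_inv, hV.eq, hS.eq]
  by_cases hdet : IsUnit V.det
  · have h : (V⁻¹ - S) * V * (V⁻¹ - S) = (V⁻¹ - S) + (S * V * S - S) := by
      simp only [Matrix.sub_mul, Matrix.mul_sub, nonsing_inv_mul V hdet, Matrix.mul_assoc,
        mul_nonsing_inv V hdet, Matrix.one_mul, Matrix.mul_one]
      abel
    rw [h, Matrix.add_apply]
    exact abs_add_le _ _
  -- the junk value `V⁻¹ = 0` of a singular `V` turns `V⁻¹ - S` into `-S`
  · have h : (V⁻¹ - S) * V * (V⁻¹ - S) = -(V⁻¹ - S) + (S * V * S - S) := by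
      simp only [nonsing_inv_apply_not_isUnit V hdet, zero_sub, Matrix.neg_mul, Matrix.mul_neg,
        neg_neg]
      abel
    rw [h, Matrix.add_apply, Matrix.neg_apply, ← abs_neg ((V⁻¹ - S) k l)]
    exact abs_add_le _ _

end DiagonalPlusRankOne

theorem abs_le_matNorm (A : Matrix (Idx m n) (Idx m n) ℝ) (k l : Idx m n) :
    |A k l| ≤ matNorm A :=
  norm_le_pi_norm (fun p : Idx m n × Idx m n => A p.1 p.2) (k, l)

theorem matNorm_le {A : Matrix (Idx m n) (Idx m n) ℝ} {b : ℝ} (hb : 0 ≤ b)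
    (h : ∀ k l, |A k l| ≤ b) : matNorm A ≤ b :=
  (pi_norm_le_iff_of_nonneg hb).2 fun p => h p.1 p.2

theorem matNorm_inv_sub_mul_mul_inv_sub_transpose_le {V S : Matrix (Idx m n) (Idx m n) ℝ}
    (hV : V.IsSymm) (hS : S.IsSymm) {b : ℝ} (hb : 0 ≤ b)
    (h : ∀ k l, |(S * V * S - S) k l| ≤ b) :
    matNorm ((V⁻¹ - S) * V * (V⁻¹ - S)ᵀ) ≤ matNorm (V⁻¹ - S) + b :=
  matNorm_le (add_nonneg (norm_nonneg _) hb) fun k l =>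
    (abs_inv_sub_mul_mul_inv_sub_transpose_apply_le hV hS k l).trans
      (add_le_add (abs_le_matNorm _ k l) (h k l))

def blockSign (m n : ℕ) : Idx m n → ℝ := Sum.elim 1 (-1)

theorem approxSWith_eq_diagInvAddRankOne (V : Matrix (Idx m n) (Idx m n) ℝ) (c : ℝ) :
    approxSWith V c = diagInvAddRankOne V.diag (blockSign m n) c := by
  ext (i | j) (i' | j') <;>
    simp [approxSWith, diagInvAddRankOne, blockSign, diagonal_apply, vecMulVec_apply]

theorem approxSWith_isSymm (V : Matrix (Idx m n) (Idx m n) ℝ) (c : ℝ) :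
    (approxSWith V c).IsSymm := by
  rw [approxSWith_eq_diagInvAddRankOne]
  exact diagInvAddRankOne_isSymm _ _ _

theorem abs_blockSign (k : Idx m n) : |blockSign m n k| = 1 := by
  rcases k with i | j <;> simp [blockSign]

namespace MemL

variable {q Q : ℝ} {V : Matrix (Idx m n) (Idx m n) ℝ}

theorem mulVec_blockSign_inl (hV : MemL m n q Q V) (i : Fin m) :
    (V *ᵥ blockSign m n) (Sum.inl i) =
      V (Sum.inl i) (Sum.inl i) - ∑ j, V (Sum.inl i) (Sum.inr j) := by
  rw [mulVec, dotProduct, Fintype.sum_sum_type, Finset.sum_eq_single i]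
  · simp [blockSign, sub_eq_add_neg]
  · intro i' _ hi'
    rw [hV.zero_ll i i' (Ne.symm hi'), zero_mul]
  · simp

theorem mulVec_blockSign_inr (hV : MemL m n q Q V) (j : Fin (n - 1)) :
    (V *ᵥ blockSign m n) (Sum.inr j) = 0 := by
  rw [mulVec, dotProduct, Fintype.sum_sum_type, Finset.sum_eq_single j]
  · simp [blockSign, hV.diag_r, ← hV.symm.apply (Sum.inl _)]
  · intro j' _ hj'
    rw [hV.zero_rr j j' (Ne.symm hj'), zero_mul]
  · simp

theorem blockSign_dotProduct_mulVec (hV : MemL m n q Q V) :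
    blockSign m n ⬝ᵥ V *ᵥ blockSign m n =
      ∑ i, (V (Sum.inl i) (Sum.inl i) - ∑ j, V (Sum.inl i) (Sum.inr j)) := by
  rw [dotProduct, Fintype.sum_sum_type]
  simp only [hV.mulVec_blockSign_inl, hV.mulVec_blockSign_inr]
  simp [blockSign]

theorem nat_mul_le_diag_inl (hV : MemL m n q Q V) (hq : 0 ≤ q) (i : Fin m) :
    n * q ≤ V (Sum.inl i) (Sum.inl i) := by
  have hrow : ((n - 1 : ℕ) : ℝ) * q ≤ ∑ j, V (Sum.inl i) (Sum.inr j) := by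
    simpa using Finset.card_nsmul_le_sum Finset.univ _ q fun j _ => hV.cross_lb i j
  have hn : (n : ℝ) ≤ (n - 1 : ℕ) + 1 := by exact_mod_cast (by omega : n ≤ n - 1 + 1)
  nlinarith [hV.diag_l_lb i]

theorem nat_mul_le_diag_inr (hV : MemL m n q Q V) (j : Fin (n - 1)) :
    m * q ≤ V (Sum.inr j) (Sum.inr j) := by
  rw [hV.diag_r]
  simpa using Finset.card_nsmul_le_sum Finset.univ _ q fun i _ => hV.cross_lb i j

theorem nat_mul_le_blockSign_dotProduct_mulVec (hV : MemL m n q Q V) :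
    m * q ≤ blockSign m n ⬝ᵥ V *ᵥ blockSign m n := by
  rw [hV.blockSign_dotProduct_mulVec]
  simpa using Finset.card_nsmul_le_sum Finset.univ _ q fun i _ => hV.diag_l_lb i

theorem lb_le_ub (hV : MemL m n q Q V) (hm : 0 < m) : q ≤ Q :=
  (hV.diag_l_lb ⟨0, hm⟩).trans (hV.diag_l_ub _)

theorem abs_sub_diagonal_diag_apply_le (hV : MemL m n q Q V) (hq : 0 < q) (hm : 0 < m)
    (hn : 0 < n) (k l : Idx m n) :
    |(V - diagonal V.diag) k l| ≤ Q / (m * q * (n * q)) * |V.diag k * V.diag l| := by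
  have hQ : 0 ≤ Q := hq.le.trans (hV.lb_le_ub hm)
  have hK : 0 ≤ Q / (m * q * (n * q)) := by positivity
  rcases k with i | j <;> rcases l with i' | j' <;>
    simp only [sub_diagonal_diag_apply, Sum.inl.injEq, Sum.inr.injEq, reduceCtorEq, if_false,
      diag_apply]
  · split_ifs with h
    · rw [abs_zero]; exact mul_nonneg hK (abs_nonneg _)
    · rw [hV.zero_ll i i' h, abs_zero]; exact mul_nonneg hK (abs_nonneg _)
  · rw [abs_of_nonneg (hV.nonneg _ _), mul_comm (V _ _)]
    exact (hV.cross_ub i j').trans <| le_div_mul_abs_mul hQ (by positivity) (by positivity)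
      (hV.nat_mul_le_diag_inr j') (hV.nat_mul_le_diag_inl hq.le i)
  · rw [hV.symm.apply, abs_of_nonneg (hV.nonneg _ _)]
    exact (hV.cross_ub i' j).trans <| le_div_mul_abs_mul hQ (by positivity) (by positivity)
      (hV.nat_mul_le_diag_inr j) (hV.nat_mul_le_diag_inl hq.le i')
  · split_ifs with h
    · rw [abs_zero]; exact mul_nonneg hK (abs_nonneg _)
    · rw [hV.zero_rr j j' h, abs_zero]; exact mul_nonneg hK (abs_nonneg _)

theorem abs_mulVec_blockSign_apply_le (hV : MemL m n q Q V) (hq : 0 < q) (hm : 0 < m)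
    (hn : 0 < n) (k : Idx m n) :
    |(V *ᵥ blockSign m n) k| ≤
      Q / (m * q * (n * q)) * |(blockSign m n ⬝ᵥ V *ᵥ blockSign m n) * V.diag k| := by
  have hQ : 0 ≤ Q := hq.le.trans (hV.lb_le_ub hm)
  rcases k with i | j
  · rw [hV.mulVec_blockSign_inl, abs_of_nonneg (hq.le.trans (hV.diag_l_lb i))]
    exact (hV.diag_l_ub i).trans <| le_div_mul_abs_mul hQ (by positivity) (by positivity)
      hV.nat_mul_le_blockSign_dotProduct_mulVec (hV.nat_mul_le_diag_inl hq.le i)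
  · rw [hV.mulVec_blockSign_inr, abs_zero]
    positivity

theorem abs_approxSWith_mul_mul_self_sub_apply_le (hV : MemL m n q Q V) (hq : 0 < q)
    (hm : 0 < m) (hn : 0 < n) (k l : Idx m n) :
    letI S := approxSWith V (blockSign m n ⬝ᵥ V *ᵥ blockSign m n)
    |(S * V * S - S) k l| ≤ 3 * (Q / (m * q * (n * q))) := by
  rw [approxSWith_eq_diagInvAddRankOne]
  exact abs_diagInvAddRankOne_mul_mul_self_sub_apply_le hV.symm rfl
    (div_nonneg (hq.le.trans (hV.lb_le_ub hm)) (by positivity)) (fun k => (abs_blockSign k).le)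
    (hV.abs_sub_diagonal_diag_apply_le hq hm hn) (hV.abs_mulVec_blockSign_apply_le hq hm hn) k l

end MemL

theorem pf'_eq_inv_sq_two_mul_cosh (x : ℝ) : pf' x = ((2 * Real.cosh (x / 2)) ^ 2)⁻¹ := by
  have h : Real.exp x = Real.exp (x / 2) ^ 2 := by rw [← Real.exp_nat_mul]; ring_nf
  rw [pf', Real.cosh_eq, Real.exp_neg, h]
  field_simp
  ring

theorem pf'_pos (x : ℝ) : 0 < pf' x := by
  rw [pf'_eq_inv_sq_two_mul_cosh]
  positivity

theorem pf'_le_quarter (x : ℝ) : pf' x ≤ 1 / 4 := by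
  rw [pf'_eq_inv_sq_two_mul_cosh, one_div]
  gcongr
  nlinarith [Real.one_le_cosh (x / 2)]

theorem pf'_le_pf'_of_abs_le {x y : ℝ} (h : |x| ≤ |y|) : pf' y ≤ pf' x := by
  rw [pf'_eq_inv_sq_two_mul_cosh, pf'_eq_inv_sq_two_mul_cosh]
  gcongr
  rw [Real.cosh_le_cosh, abs_div, abs_div]
  gcongr

theorem pf'_two_mul_norm_le {x : ℝ} {θ : Idx m n → ℝ} (h : |x| ≤ 2 * ‖θ‖) :
    pf' (2 * ‖θ‖) ≤ pf' x :=
  pf'_le_pf'_of_abs_le (h.trans_eq (abs_of_nonneg (by positivity)).symm)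

theorem fisher_inl_inl_sub_sum (θ : Idx m n → ℝ) (hn : 0 < n) (i : Fin m) :
    fisher θ (Sum.inl i) (Sum.inl i) - ∑ j, fisher θ (Sum.inl i) (Sum.inr j) =
      pf' (alphaF θ i) := by
  obtain ⟨k, rfl⟩ : ∃ k, n = k + 1 := ⟨n - 1, by omega⟩
  simp [fisher, Fin.sum_univ_castSucc, betaF]

theorem fisher_memL (θ : Idx m n → ℝ) (hn : 0 < n) :
    MemL m n (pf' (2 * ‖θ‖)) (1 / 4) (fisher θ) := by
  have hθ : ∀ k, |θ k| ≤ ‖θ‖ := norm_le_pi_norm θ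
  have hcross : ∀ i j, |alphaF θ i + θ (Sum.inr j)| ≤ 2 * ‖θ‖ := fun i j =>
    (abs_add_le _ _).trans (by linarith [show |alphaF θ i| ≤ ‖θ‖ from hθ _, hθ (Sum.inr j)])
  refine
    { symm := ?_
      nonneg := ?_
      zero_ll := fun i i' h => if_neg h
      zero_rr := fun j j' h => if_neg h
      cross_lb := fun i j => pf'_two_mul_norm_le (hcross i j)
      cross_ub := fun _ _ => pf'_le_quarter _
      diag_l_lb := fun i => ?_
      diag_l_ub := fun i => by rw [fisher_inl_inl_sub_sum θ hn]; exact pf'_le_quarter _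
      diag_r := fun j => if_pos rfl }
  · refine IsSymm.ext ?_
    rintro (i | j) (i' | j')
    all_goals simp only [fisher]
    · rcases eq_or_ne i i' with rfl | h <;> simp [*, Ne.symm]
    · rcases eq_or_ne j j' with rfl | h <;> simp [*, Ne.symm]
  · rintro (i | j) (i' | j') <;> simp only [fisher]
    all_goals first | exact (pf'_pos _).le | split_ifs
    all_goals first | exact le_rfl | exact Finset.sum_nonneg fun _ _ => (pf'_pos _).le
  · rw [fisher_inl_inl_sub_sum θ hn]
    exact pf'_two_mul_norm_le ((hθ (Sum.inl i)).trans (by linarith [norm_nonneg θ]))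

/-- Lemma 6: bound on `‖U‖` where `U = R V Rᵀ`, `R = V⁻¹ - S`. -/
theorem cov_remainder_bound (m n : ℕ) (hm : 1 ≤ m) (hmn : m ≤ n) (θ : Idx m n → ℝ) :
    matNorm (((fisher θ)⁻¹ - fisherS θ) * fisher θ * ((fisher θ)⁻¹ - fisherS θ)ᵀ) ≤
      matNorm ((fisher θ)⁻¹ - fisherS θ) +
        3 * (1 + Real.exp (2 * ‖θ‖)) ^ 4 / (4 * m * n * Real.exp (4 * ‖θ‖)) := by
  have hn : 0 < n := by omega
  have hV := fisher_memL θ hn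
  have hS : fisherS θ = approxSWith (fisher θ) (blockSign m n ⬝ᵥ fisher θ *ᵥ blockSign m n) := by
    rw [hV.blockSign_dotProduct_mulVec]; rfl
  have hB : 3 * (1 / 4 / (m * pf' (2 * ‖θ‖) * (n * pf' (2 * ‖θ‖)))) =
      3 * (1 + Real.exp (2 * ‖θ‖)) ^ 4 / (4 * m * n * Real.exp (4 * ‖θ‖)) := by
    have h : Real.exp (4 * ‖θ‖) = Real.exp (2 * ‖θ‖) ^ 2 := by rw [← Real.exp_nat_mul]; ring_nf
    rw [pf', h]
    field_simp
  have hq := pf'_pos (2 * ‖θ‖)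
  rw [← hB, hS]
  exact matNorm_inv_sub_mul_mul_inv_sub_transpose_le hV.symm (approxSWith_isSymm _ _)
    (by positivity) (hV.abs_approxSWith_mul_mul_self_sub_apply_le hq hm hn)

end Affiliation
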